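/- arXiv:2212.03939 — 4 statements merged into one kernel-verified Lean document; each statement's English description precedes it below -/
import Mathlib

section
/- Let V ⊆ F_q^n be a set of vectors such that any n distinct vectors of V are linearly independent over F_q. Let k satisfy 2k ≤ n. If V, W ∈ V^k each consist of k pairwise distinct vectors, y, y' ∈ (F_q^×)^k, and ∑_{i=1}^k y_i v_i = ∑_{i=1}^k y'_i w_i, then the multiset {v_1,...,v_k} equals {w_1,...,w_k}, and after permuting indices so that v_i = w_i for all i, one has y_i = y'_i for all i. -/
/-!
Collect all the vectors `v i` and `w j` in one set `S`. It has at most `2k ≤ n` elements, so it is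
linearly independent, and both sides of `∑ y i • v i = ∑ y' j • w j` are linear combinations of
`S`. Hence their coefficient functions on `S` agree: the coefficient of `v i` is `y i ≠ 0` on the
left, so `v i = w j` for some `j`, and then `y' j = y i`. Since `v` is injective, `i ↦ j` is an
injection of `Fin k` into itself, i.e. a permutation.
-/

open Function Finsupp

section SumSingle

variable {R α ι : Type*} [Semiring R] [Fintype ι]

theorem Finsupp.sum_single_apply_of_injective {u : ι → α} (hu : Injective u) (z : ι → R)
    (i : ι) : (∑ j, single (u j) (z j)) (u i) = z i := by
  classical
  simp [finsetSum_apply, single_apply, hu.eq_iff]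

theorem Finsupp.sum_single_apply_of_notMem_range {u : ι → α} {a : α} (ha : a ∉ Set.range u)
    (z : ι → R) : (∑ j, single (u j) (z j)) a = 0 := by
  classical
  rw [finsetSum_apply]
  exact Finset.sum_eq_zero fun j _ => single_eq_of_ne fun h => ha ⟨j, h.symm⟩

theorem Finsupp.sum_single_mem_supported {s : Set α} {u : ι → α} (hu : ∀ i, u i ∈ s)
    (z : ι → R) : ∑ i, single (u i) (z i) ∈ supported R R s :=
  Submodule.sum_mem _ fun i _ => single_mem_supported R _ (hu i)

variable {M : Type*} [AddCommMonoid M] [Module R M]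

theorem Finsupp.linearCombination_id_sum_single (u : ι → M) (z : ι → R) :
    linearCombination R id (∑ i, single (u i) (z i)) = ∑ i, z i • u i := by
  simp [map_sum]

end SumSingle

section LinearIndepOn

variable {R M ι ι' : Type*} [Semiring R] [AddCommMonoid M] [Module R M] [Fintype ι] [Fintype ι']
  {s : Set M} {u : ι → M} {u' : ι' → M} {z : ι → R} {z' : ι' → R}

theorem LinearIndepOn.sum_single_eq_of_sum_smul_eq (hs : LinearIndepOn R id s)
    (hu : ∀ i, u i ∈ s) (hu' : ∀ j, u' j ∈ s) (h : ∑ i, z i • u i = ∑ j, z' j • u' j) :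
    ∑ i, single (u i) (z i) = ∑ j, single (u' j) (z' j) :=
  linearIndepOn_iffₛ.mp hs _ (sum_single_mem_supported hu z) _ (sum_single_mem_supported hu' z')
    (by rwa [linearCombination_id_sum_single, linearCombination_id_sum_single])

theorem LinearIndepOn.exists_eq_of_sum_smul_eq (hs : LinearIndepOn R id s)
    (hu_inj : Injective u) (hu'_inj : Injective u') (hu : ∀ i, u i ∈ s) (hu' : ∀ j, u' j ∈ s)
    (hz : ∀ i, z i ≠ 0) (h : ∑ i, z i • u i = ∑ j, z' j • u' j) (i : ι) :
    ∃ j, u' j = u i ∧ z' j = z i := by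
  have hcoeff := congr($(hs.sum_single_eq_of_sum_smul_eq hu hu' h) (u i))
  rw [sum_single_apply_of_injective hu_inj] at hcoeff
  by_cases hi : u i ∈ Set.range u'
  · obtain ⟨j, hj⟩ := hi
    refine ⟨j, hj, ?_⟩
    rw [hcoeff, ← hj, sum_single_apply_of_injective hu'_inj]
  · exact absurd (hcoeff.trans (sum_single_apply_of_notMem_range hi z')) (hz i)

end LinearIndepOn

theorem Equiv.Perm.exists_forall_of_forall_exists {ι : Type*} [Finite ι] {P : ι → ι → Prop}
    (hex : ∀ i, ∃ j, P i j) (huniq : ∀ i i' j, P i j → P i' j → i = i') :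
    ∃ π : Equiv.Perm ι, ∀ i, P i (π i) := by
  choose f hf using hex
  have hf_inj : Injective f := fun i i' h => huniq i i' (f i) (hf i) (h ▸ hf i')
  exact ⟨Equiv.ofBijective f (Finite.injective_iff_bijective.mp hf_inj), hf⟩

theorem good_preimage_unique_up_to_permutation_general
    (F : Type*) [Field F] (n k : ℕ) (V : Set (Fin n → F))
    (hV : ∀ S : Finset (Fin n → F), ↑S ⊆ V → S.card ≤ n →
      LinearIndependent F (fun s : S => (s : Fin n → F)))
    (hk : 2 * k ≤ n)
    (v w : Fin k → (Fin n → F)) (y y' : Fin k → F)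
    (hv : ∀ i, v i ∈ V) (hw : ∀ i, w i ∈ V)
    (hvinj : Function.Injective v) (hwinj : Function.Injective w)
    (hy : ∀ i, y i ≠ 0)
    (hZ : ∑ i, y i • v i = ∑ i, y' i • w i) :
    ∃ π : Equiv.Perm (Fin k), ∀ i, w (π i) = v i ∧ y' (π i) = y i := by
  classical
  set S := Finset.univ.image v ∪ Finset.univ.image w
  have hvS : ∀ i, v i ∈ (S : Set (Fin n → F)) := by simp [S]
  have hwS : ∀ i, w i ∈ (S : Set (Fin n → F)) := by simp [S]
  have hSV : ↑S ⊆ V := by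
    intro x hx
    simp only [S, Finset.coe_union, Finset.coe_image, Finset.coe_univ, Set.image_univ] at hx
    rcases hx with ⟨i, rfl⟩ | ⟨i, rfl⟩
    exacts [hv i, hw i]
  have hS_card : S.card ≤ n :=
    calc S.card ≤ k + k := (Finset.card_union_le _ _).trans <| add_le_add
          (Finset.card_image_le.trans (by simp)) (Finset.card_image_le.trans (by simp))
      _ ≤ n := by omega
  have hS : LinearIndepOn F id (S : Set (Fin n → F)) := hV S hSV hS_card
  exact Equiv.Perm.exists_forall_of_forall_exists
    (hS.exists_eq_of_sum_smul_eq hvinj hwinj hvS hwS hy hZ)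
    fun i i' _ hi hi' => hvinj (hi.1.symm.trans hi'.1)

theorem good_preimage_unique_up_to_permutation
    (F : Type*) [Field F] (n k : ℕ) (V : Set (Fin n → F))
    (hV : ∀ S : Finset (Fin n → F), ↑S ⊆ V → S.card ≤ n →
      LinearIndependent F (fun s : S => (s : Fin n → F)))
    (hk : 2 * k ≤ n)
    (v w : Fin k → (Fin n → F)) (y y' : Fin k → F)
    (hv : ∀ i, v i ∈ V) (hw : ∀ i, w i ∈ V)
    (hvinj : Function.Injective v) (hwinj : Function.Injective w)
    (hy : ∀ i, y i ≠ 0) (hy' : ∀ i, y' i ≠ 0)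
    (hZ : ∑ i, y i • v i = ∑ i, y' i • w i) :
    ∃ π : Equiv.Perm (Fin k), ∀ i, w (π i) = v i ∧ y' (π i) = y i :=
  good_preimage_unique_up_to_permutation_general F n k V hV hk v w y y' hv hw hvinj hwinj hy hZ
end

section
/- Let V ⊆ F_q^n with the property that any n distinct vectors of V are linearly independent, and let 2k ≤ n. Define Z : V^k × F_q^k → F_q^n by Z(V,y) = ∑ y_i v_i, and for z ∈ F_q^n let G(z) be the set of preimages (V,y) of z with the v_i pairwise distinct and all y_i nonzero. Then for every z ∈ F_q^n, |G(z)| is either 0 or k!. -/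
/-!
Two good representations of `z` together use at most `2k ≤ n` vectors of `V`, which are
therefore linearly independent. So `z` determines the coefficient function `v i ↦ y i` on `V`,
and a good tuple is recovered from that function up to the order of its `k` entries: the
permutations of `Fin k` act simply transitively on a nonempty fiber.
-/

open Finsupp Function

namespace Finsupp

variable {ι α : Type*} [Finite ι]

theorem exists_perm_of_mapDomain_eq {M : Type*} [AddCommMonoid M] {v v' : ι → α}
    {y y' : ι → M} (hv : Injective v) (hv' : Injective v') (hy' : ∀ i, y' i ≠ 0)
    (h : mapDomain v (equivFunOnFinite.symm y) = mapDomain v' (equivFunOnFinite.symm y')) :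
    ∃ σ : Equiv.Perm ι, v' = v ∘ σ ∧ y' = y ∘ σ := by
  have hval : ∀ i, mapDomain v (equivFunOnFinite.symm y) (v' i) = y' i := by
    simp [h, mapDomain_apply hv']
  have hrange : ∀ i, ∃ j, v j = v' i := fun i =>
    mem_range_of_mapDomain_ne_zero (hval i ▸ hy' i)
  choose π hπ using hrange
  have hπ_inj : Injective π := by
    refine Injective.of_comp (f := v) ?_
    simpa only [comp_def, hπ] using hv'
  refine ⟨Equiv.ofBijective π (Finite.injective_iff_bijective.mp hπ_inj), ?_, ?_⟩
  · ext1 i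
    exact (hπ i).symm
  · ext1 i
    rw [← hval i, ← hπ i, mapDomain_apply hv]
    rfl

variable {R : Type*} [Semiring R]

theorem mapDomain_equivFunOnFinite_symm_mem_supported (v : ι → α) (y : ι → R) :
    mapDomain v (equivFunOnFinite.symm y) ∈ supported R R (Set.range v) := by
  classical
  rw [mem_supported]
  refine (Finset.coe_subset.mpr mapDomain_support).trans ?_
  simp

theorem linearCombination_id_mapDomain_equivFunOnFinite_symm [Fintype ι] {M : Type*}
    [AddCommMonoid M] [Module R M] (v : ι → M) (y : ι → R) :
    linearCombination R id (mapDomain v (equivFunOnFinite.symm y)) = ∑ i, y i • v i := by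
  rw [linearCombination_mapDomain, id_comp]
  simp [linearCombination_apply, Finsupp.sum_fintype]

end Finsupp

theorem exists_perm_of_sum_smul_eq {ι R M : Type*} [Fintype ι] [Semiring R] [AddCommMonoid M]
    [Module R M] {V : Set M} {n : ℕ}
    (hV : ∀ S : Finset M, ↑S ⊆ V → S.card ≤ n →
      LinearIndependent R (fun s : S => (s : M)))
    (hn : 2 * Fintype.card ι ≤ n) {v v' : ι → M} {y y' : ι → R}
    (hvV : ∀ i, v i ∈ V) (hv'V : ∀ i, v' i ∈ V) (hv : Injective v) (hv' : Injective v')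
    (hy' : ∀ i, y' i ≠ 0) (h : ∑ i, y i • v i = ∑ i, y' i • v' i) :
    ∃ σ : Equiv.Perm ι, v' = v ∘ σ ∧ y' = y ∘ σ := by
  classical
  let T : Finset M := Finset.univ.image v ∪ Finset.univ.image v'
  have hTV : ↑T ⊆ V := by
    simp only [T, Finset.coe_union, Finset.coe_image, Finset.coe_univ, Set.image_univ,
      Set.union_subset_iff, Set.range_subset_iff]
    exact ⟨hvV, hv'V⟩
  have hT : T.card ≤ n := calc
    T.card ≤ (Finset.univ.image v).card + (Finset.univ.image v').card := Finset.card_union_le _ _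
    _ ≤ Fintype.card ι + Fintype.card ι := add_le_add Finset.card_image_le Finset.card_image_le
    _ ≤ n := by omega
  have hT_indep : LinearIndepOn R id (T : Set M) := hV T hTV hT
  have hT_supp : ∀ (w : ι → M) (c : ι → R), (∀ i, w i ∈ T) →
      mapDomain w (equivFunOnFinite.symm c) ∈ supported R R (T : Set M) := fun w c hw =>
    supported_mono (Set.range_subset_iff.mpr hw) (mapDomain_equivFunOnFinite_symm_mem_supported w c)
  refine exists_perm_of_mapDomain_eq hv hv' hy' <|
    linearIndepOn_iffₛ.mp hT_indep _ (hT_supp v y fun i => ?_) _ (hT_supp v' y' fun i => ?_) ?_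
  · simp [T]
  · simp [T]
  · simpa only [linearCombination_id_mapDomain_equivFunOnFinite_symm] using h

theorem ncard_range_perm_comp {ι α M : Type*} [Finite ι] {v : ι → α} (hv : Injective v)
    (y : ι → M) :
    (Set.range fun σ : Equiv.Perm ι => (v ∘ σ, y ∘ σ)).ncard = (Nat.card ι).factorial := by
  rw [Set.ncard_range_of_injective, Nat.card_perm]
  intro σ τ hστ
  exact Equiv.ext fun i => hv (congrFun (Prod.ext_iff.mp hστ).1 i)

theorem good_fiber_count_zero_or_factorial
    (F : Type*) [Field F] (n k : ℕ) (V : Set (Fin n → F))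
    (hV : ∀ S : Finset (Fin n → F), ↑S ⊆ V → S.card ≤ n →
      LinearIndependent F (fun s : S => (s : Fin n → F)))
    (hk : 2 * k ≤ n) (z : Fin n → F) :
    (Set.ncard {p : (Fin k → (Fin n → F)) × (Fin k → F) |
        (∀ i, p.1 i ∈ V) ∧ Function.Injective p.1 ∧ (∀ i, p.2 i ≠ 0) ∧
        ∑ i, p.2 i • p.1 i = z} = 0) ∨
    (Set.ncard {p : (Fin k → (Fin n → F)) × (Fin k → F) |
        (∀ i, p.1 i ∈ V) ∧ Function.Injective p.1 ∧ (∀ i, p.2 i ≠ 0) ∧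
        ∑ i, p.2 i • p.1 i = z} = Nat.factorial k) := by
  set G := {p : (Fin k → (Fin n → F)) × (Fin k → F) |
    (∀ i, p.1 i ∈ V) ∧ Function.Injective p.1 ∧ (∀ i, p.2 i ≠ 0) ∧
      ∑ i, p.2 i • p.1 i = z}
  rcases G.eq_empty_or_nonempty with hG | ⟨⟨v, y⟩, hvV, hv, hy, hz⟩
  · exact Or.inl (hG ▸ Set.ncard_empty _)
  right
  suffices G = Set.range fun σ : Equiv.Perm (Fin k) => (v ∘ σ, y ∘ σ) by
    rw [this, ncard_range_perm_comp hv, Nat.card_eq_fintype_card, Fintype.card_fin]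
  ext ⟨v', y'⟩
  constructor
  · rintro ⟨hv'V, hv', hy', hz'⟩
    obtain ⟨σ, rfl, rfl⟩ := exists_perm_of_sum_smul_eq hV (by simpa using hk) hvV hv'V hv hv'
      hy' (hz.trans hz'.symm)
    exact ⟨σ, rfl⟩
  · rintro ⟨σ, hσ⟩
    obtain ⟨rfl, rfl⟩ := Prod.ext_iff.mp hσ
    exact ⟨fun i => hvV _, hv.comp σ.injective, fun i => hy _,
      (Equiv.sum_comp σ fun i => y i • v i).trans hz⟩
end

section
/- Let V ⊆ F_q^n be finite and suppose for every nonzero t ∈ F_q^n, #{v ∈ V : t·v = 0} ≤ B. Then the second moment satisfies ∑_{z ∈ F_q^n} |Z^{-1}(z)|² ≤ (|V|q)^{2k}/q^n + (Bq)^{2k}, where Z(V,y) = ∑ y_i v_i. -/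
/-!
Expanding the square, `∑_z |Z⁻¹(z)|²` counts pairs of representations with equal sums, i.e. zero
sums `∑ cᵢ uᵢ = 0` with `u ∈ V^{2k}`, `c ∈ F^{2k}`. For fixed `u`, rank–nullity and
`rank Aᵀ = rank A` for the matrix with rows `uᵢ` give `#{c} · qⁿ = q^{2k} · #{t | ∀ i, t ⬝ uᵢ = 0}`.
Summing over `u` and swapping the sums turns the count into `q^{2k} ∑_t #{v ∈ V | t ⬝ v = 0}^{2k}`,
where `t = 0` contributes `|V|^{2k}` and each of the other `< qⁿ` terms at most `B^{2k}`.
-/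

open Finset Matrix

section Duality

variable {F : Type*} [Field F] [Fintype F] [DecidableEq F] {m n : Type*} [Fintype m] [Fintype n]

theorem Matrix.card_vecMul_eq_zero_mul [DecidableEq m] [DecidableEq n] (A : Matrix m n F) :
    #{x | x ᵥ* A = 0} * Fintype.card F ^ Fintype.card n
      = Fintype.card F ^ Fintype.card m * #{y | A *ᵥ y = 0} := by
  have hleft : #{x | x ᵥ* A = 0} = Nat.card (LinearMap.ker A.vecMulLinear) := by
    rw [← Fintype.card_subtype, ← Nat.card_eq_fintype_card]
    exact Nat.card_congr (Equiv.subtypeEquivRight fun _ => by simp)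
  have hright : #{y | A *ᵥ y = 0} = Nat.card (LinearMap.ker A.mulVecLin) := by
    rw [← Fintype.card_subtype, ← Nat.card_eq_fintype_card]
    exact Nat.card_congr (Equiv.subtypeEquivRight fun _ => by simp)
  have hrank_left : A.rank + Module.finrank F (LinearMap.ker A.vecMulLinear) = Fintype.card m := by
    rw [← A.rank_transpose, rank, mulVecLin_transpose,
      LinearMap.finrank_range_add_finrank_ker, Module.finrank_fintype_fun_eq_card]
  have hrank_right : A.rank + Module.finrank F (LinearMap.ker A.mulVecLin) = Fintype.card n := by
    rw [rank, LinearMap.finrank_range_add_finrank_ker, Module.finrank_fintype_fun_eq_card]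
  rw [hleft, hright, Module.natCard_eq_pow_finrank (K := F) (V := LinearMap.ker A.vecMulLinear),
    Module.natCard_eq_pow_finrank (K := F) (V := LinearMap.ker A.mulVecLin),
    Nat.card_eq_fintype_card, ← pow_add, ← pow_add]
  congr 1
  omega

theorem card_linearCombination_eq_zero_mul {I ι : Type*} [Fintype I] [DecidableEq I]
    [Fintype ι] [DecidableEq ι] (u : I → ι → F) :
    #{c : I → F | ∑ i, c i • u i = 0} * Fintype.card F ^ Fintype.card ι
      = Fintype.card F ^ Fintype.card I * #{t : ι → F | ∀ i, t ⬝ᵥ u i = 0} := by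
  have hvecMul (c : I → F) : c ᵥ* of u = ∑ i, c i • u i := vecMul_eq_sum c (of u)
  have hmulVec (t : ι → F) : of u *ᵥ t = 0 ↔ ∀ i, t ⬝ᵥ u i = 0 := by
    simp only [funext_iff, mulVec, of_apply, Pi.zero_apply, dotProduct_comm]
  simpa only [hvecMul, hmulVec] using card_vecMul_eq_zero_mul (of u)

end Duality

theorem sum_card_filter_eq_sq {α β : Type*} [Fintype β] [DecidableEq β]
    (s : Finset α) (f : α → β) :
    ∑ z, #{a ∈ s | f a = z} ^ 2 = #{ab ∈ s ×ˢ s | f ab.1 = f ab.2} := by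
  rw [card_eq_sum_card_fiberwise (f := fun ab => f ab.1) (t := univ) fun _ _ => mem_univ _]
  refine sum_congr rfl fun z _ => ?_
  rw [filter_filter, sq, ← card_product]
  congr 1
  ext ⟨a, b⟩
  simp only [mem_filter, mem_product]
  constructor
  · rintro ⟨⟨ha, rfl⟩, hb, hab⟩
    exact ⟨⟨ha, hb⟩, hab.symm, rfl⟩
  · rintro ⟨⟨ha, hb⟩, hab, rfl⟩
    exact ⟨⟨ha, rfl⟩, hb, hab.symm⟩

section LinearCombinationFiber

variable (F : Type*) {E : Type*} [Ring F] [Fintype F] [AddCommGroup E] [Module F E]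
  [DecidableEq E] (V : Finset E) (I : Type*) [Fintype I] [DecidableEq I]

/-- The paper's `Z⁻¹(z)`, for `Z(v, y) = ∑ i, y i • v i`. -/
def linearCombinationFiber (z : E) : Finset ((I → E) × (I → F)) :=
  {p ∈ Fintype.piFinset (fun _ => V) ×ˢ univ | ∑ i, p.2 i • p.1 i = z}

theorem sum_card_linearCombinationFiber_sq [Fintype E] :
    ∑ z, #(linearCombinationFiber F V I z) ^ 2 = #(linearCombinationFiber F V (I ⊕ I) 0) := by
  simp only [linearCombinationFiber]
  rw [sum_card_filter_eq_sq]
  -- `((v, y), (v', y')) ↦ (Sum.elim v v', Sum.elim y (-y'))` turns equal sums into a zero sum.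
  refine card_equiv ((Equiv.prodProdProdComm _ _ _ _).trans
    ((Equiv.sumArrowEquivProdArrow _ _ _).symm.prodCongr
      (((Equiv.refl _).prodCongr (Equiv.neg _)).trans (Equiv.sumArrowEquivProdArrow _ _ _).symm))) ?_
  rintro ⟨⟨v, y⟩, v', y'⟩
  simp [Fintype.sum_sum_type, ← sub_eq_add_neg, sub_eq_zero]

end LinearCombinationFiber

theorem Fintype.filter_piFinset_forall {I α : Type*} [Fintype I] [DecidableEq I]
    (s : Finset α) (p : α → Prop) [DecidablePred p] :
    {u ∈ piFinset fun _ : I => s | ∀ i, p (u i)} = piFinset fun _ => {a ∈ s | p a} := by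
  ext u
  simp only [mem_filter, Fintype.mem_piFinset, forall_and]

theorem card_linearCombinationFiber_zero_mul {F ι : Type*} [Field F] [Fintype F] [DecidableEq F]
    [Fintype ι] [DecidableEq ι] (V : Finset (ι → F)) (I : Type*) [Fintype I] [DecidableEq I] :
    #(linearCombinationFiber F V I 0) * Fintype.card F ^ Fintype.card ι
      = Fintype.card F ^ Fintype.card I * ∑ t : ι → F, #{v ∈ V | t ⬝ᵥ v = 0} ^ Fintype.card I := by
  have hfiber : #(linearCombinationFiber F V I 0)
      = ∑ u ∈ Fintype.piFinset fun _ => V, #{c : I → F | ∑ i, c i • u i = 0} := by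
    simp only [linearCombinationFiber, card_filter, sum_product]
  calc #(linearCombinationFiber F V I 0) * Fintype.card F ^ Fintype.card ι
      = ∑ u ∈ Fintype.piFinset fun _ => V,
          Fintype.card F ^ Fintype.card I * #{t : ι → F | ∀ i, t ⬝ᵥ u i = 0} := by
        rw [hfiber, sum_mul]
        exact sum_congr rfl fun u _ => card_linearCombination_eq_zero_mul u
    _ = Fintype.card F ^ Fintype.card I
          * ∑ t : ι → F, #{u ∈ Fintype.piFinset fun _ => V | ∀ i, t ⬝ᵥ u i = 0} := by
        rw [← mul_sum]
        congr 1
        exact sum_card_bipartiteAbove_eq_sum_card_bipartiteBelow _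
    _ = _ := by
        congr 1
        refine sum_congr rfl fun t _ => ?_
        rw [Fintype.filter_piFinset_forall V (t ⬝ᵥ · = 0), Fintype.card_piFinset, prod_const,
          card_univ]

theorem sum_card_filter_dotProduct_eq_zero_pow_le {F ι : Type*} [Field F] [Fintype F]
    [DecidableEq F] [Fintype ι] [DecidableEq ι] (V : Finset (ι → F)) (B m : ℕ)
    (hB : ∀ t : ι → F, t ≠ 0 → #{v ∈ V | t ⬝ᵥ v = 0} ≤ B) :
    ∑ t : ι → F, #{v ∈ V | t ⬝ᵥ v = 0} ^ m ≤ #V ^ m + Fintype.card F ^ Fintype.card ι * B ^ m := by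
  rw [← add_sum_erase _ _ (mem_univ 0)]
  gcongr
  · exact filter_subset _ V
  · calc ∑ t ∈ univ.erase 0, #{v ∈ V | t ⬝ᵥ v = 0} ^ m
        ≤ ∑ t ∈ univ.erase (0 : ι → F), B ^ m :=
          sum_le_sum fun t ht => Nat.pow_le_pow_left (hB t (ne_of_mem_erase ht)) m
      _ ≤ Fintype.card F ^ Fintype.card ι * B ^ m := by
          rw [sum_const, smul_eq_mul, ← Fintype.card_fun]
          exact Nat.mul_le_mul_right _ (card_erase_le.trans_eq card_univ)

open scoped Classical in
theorem second_moment_upper_bound_general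
    (F : Type*) [Field F] [Fintype F] (n k : ℕ)
    (V : Finset (Fin n → F)) (B : ℕ)
    (hB : ∀ t : Fin n → F, t ≠ 0 → (V.filter (fun v => ∑ j, t j * v j = 0)).card ≤ B) :
    ∑ z : Fin n → F,
      ((Set.ncard {p : (Fin k → (Fin n → F)) × (Fin k → F) |
          (∀ i, p.1 i ∈ V) ∧ ∑ i, p.2 i • p.1 i = z} : ℝ)) ^ 2
    ≤ ((V.card : ℝ) * (Fintype.card F : ℝ)) ^ (2 * k) / (Fintype.card F : ℝ) ^ n
      + ((B : ℝ) * (Fintype.card F : ℝ)) ^ (2 * k) := by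
  have hncard (z : Fin n → F) : Set.ncard {p : (Fin k → (Fin n → F)) × (Fin k → F) |
      (∀ i, p.1 i ∈ V) ∧ ∑ i, p.2 i • p.1 i = z} = #(linearCombinationFiber F V (Fin k) z) := by
    rw [Set.ncard_eq_toFinset_card']
    congr 1
    ext p
    simp [linearCombinationFiber]
  have hcount : (∑ z, #(linearCombinationFiber F V (Fin k) z) ^ 2) * Fintype.card F ^ n
      ≤ Fintype.card F ^ (2 * k) * (#V ^ (2 * k) + Fintype.card F ^ n * B ^ (2 * k)) := by
    have hcard : Fintype.card (Fin k ⊕ Fin k) = 2 * k := by simp [two_mul]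
    have hzero := card_linearCombinationFiber_zero_mul V (Fin k ⊕ Fin k)
    have hbound := sum_card_filter_dotProduct_eq_zero_pow_le V B (2 * k) hB
    rw [hcard, Fintype.card_fin] at hzero
    rw [Fintype.card_fin] at hbound
    rw [sum_card_linearCombinationFiber_sq, hzero]
    exact Nat.mul_le_mul_left _ hbound
  have hq : (0 : ℝ) < Fintype.card F ^ n := by positivity
  simp_rw [hncard]
  rw [div_add' _ _ _ hq.ne', le_div_iff₀ hq]
  calc (∑ z, (#(linearCombinationFiber F V (Fin k) z) : ℝ) ^ 2) * Fintype.card F ^ n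
      ≤ Fintype.card F ^ (2 * k) * (#V ^ (2 * k) + Fintype.card F ^ n * B ^ (2 * k)) := by
        exact_mod_cast hcount
    _ = (#V * Fintype.card F) ^ (2 * k) + (B * Fintype.card F) ^ (2 * k) * Fintype.card F ^ n := by
        ring

open scoped Classical in
theorem second_moment_upper_bound
    (F : Type*) [Field F] [Fintype F] (n k : ℕ) (hk : 1 ≤ k)
    (V : Finset (Fin n → F)) (B : ℕ)
    (hB : ∀ t : Fin n → F, t ≠ 0 → (V.filter (fun v => ∑ j, t j * v j = 0)).card ≤ B) :
    ∑ z : Fin n → F,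
      ((Set.ncard {p : (Fin k → (Fin n → F)) × (Fin k → F) |
          (∀ i, p.1 i ∈ V) ∧ ∑ i, p.2 i • p.1 i = z} : ℝ)) ^ 2
    ≤ ((V.card : ℝ) * (Fintype.card F : ℝ)) ^ (2 * k) / (Fintype.card F : ℝ) ^ n
      + ((B : ℝ) * (Fintype.card F : ℝ)) ^ (2 * k) :=
  second_moment_upper_bound_general F n k V B hB
end

section
/- Suppose a state |φ_c⟩ is given with c chosen uniformly at random from a finite set C, and one measures with an orthogonal (projective) measurement with outcomes in C. Then the probability of correctly identifying c is at most dim span{|φ_c⟩ : c ∈ C} / |C|. -/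
/-!
Write `V` for the span of the states and fix an orthonormal basis `(e_i)` of `V`. Expanding the
unit vector `φ_c ∈ V` in this basis, Cauchy–Schwarz gives `‖P_c φ_c‖² ≤ ∑_i ‖P_c e_i‖²`. Summing over
`c` and exchanging the sums, Bessel's inequality for the mutually orthogonal projections `P_c`
bounds each `∑_c ‖P_c e_i‖²` by `‖e_i‖² = 1`, so the total is at most `dim V`.
-/

section

open Finset

variable {𝕜 E : Type*} [RCLike 𝕜] [NormedAddCommGroup E] [InnerProductSpace 𝕜 E]

theorem OrthogonalFamily.sum_norm_sq_starProjection_le {ι : Type*} {V : ι → Submodule 𝕜 E}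
    [∀ i, (V i).HasOrthogonalProjection]
    (hV : OrthogonalFamily 𝕜 (fun i => V i) fun i => (V i).subtypeₗᵢ) (s : Finset ι) (x : E) :
    ∑ i ∈ s, ‖(V i).starProjection x‖ ^ 2 ≤ ‖x‖ ^ 2 := by
  set y := ∑ i ∈ s, (V i).starProjection x
  have hy_norm : ‖y‖ ^ 2 = ∑ i ∈ s, ‖(V i).starProjection x‖ ^ 2 :=
    hV.norm_sum (fun i => (V i).orthogonalProjectionOnto x) s
  have hy_inner : ‖y‖ ^ 2 = RCLike.re (inner 𝕜 y x) := by
    simp only [y, hy_norm, sum_inner, map_sum, Submodule.re_inner_starProjection_eq_normSq,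
      Submodule.coe_norm, Submodule.coe_orthogonalProjectionOnto_apply]
  have hy_le : ‖y‖ ^ 2 ≤ ‖y‖ * ‖x‖ := hy_inner ▸ re_inner_le_norm y x
  rw [← hy_norm]
  nlinarith [norm_nonneg x, norm_nonneg y]

theorem OrthonormalBasis.norm_sq_map_le {ι F G : Type*} [Fintype ι] [NormedAddCommGroup F]
    [InnerProductSpace 𝕜 F] [SeminormedAddCommGroup G] [NormedSpace 𝕜 G]
    (b : OrthonormalBasis ι 𝕜 F) (T : F →ₗ[𝕜] G) (v : F) :
    ‖T v‖ ^ 2 ≤ ‖v‖ ^ 2 * ∑ i, ‖T (b i)‖ ^ 2 := by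
  calc ‖T v‖ ^ 2 = ‖∑ i, inner 𝕜 (b i) v • T (b i)‖ ^ 2 := by
        simp only [← map_smul, ← map_sum, b.sum_repr']
    _ ≤ (∑ i, ‖inner 𝕜 (b i) v‖ * ‖T (b i)‖) ^ 2 := by
        gcongr
        exact (norm_sum_le _ _).trans_eq (by simp only [norm_smul])
    _ ≤ (∑ i, ‖inner 𝕜 (b i) v‖ ^ 2) * ∑ i, ‖T (b i)‖ ^ 2 := sum_mul_sq_le_sq_mul_sq _ _ _
    _ = ‖v‖ ^ 2 * ∑ i, ‖T (b i)‖ ^ 2 := by rw [b.sum_sq_norm_inner_right]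

end

theorem projective_measurement_success_bound_general
    (H : Type*) [NormedAddCommGroup H] [InnerProductSpace ℂ H]
    [FiniteDimensional ℂ H]
    (C : Type*) [Fintype C]
    (φ : C → H) (hφ : ∀ c, ‖φ c‖ = 1)
    (P : C → Submodule ℂ H)
    (horth : ∀ c c', c ≠ c' → ∀ x ∈ P c, ∀ y ∈ P c', inner (𝕜 := ℂ) x y = 0) :
    (∑ c : C, ‖((P c).orthogonalProjection (φ c) : H)‖ ^ 2) / (Fintype.card C : ℝ)
      ≤ (Module.finrank ℂ (Submodule.span ℂ (Set.range φ)) : ℝ)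
          / (Fintype.card C : ℝ) := by
  gcongr
  set V := Submodule.span ℂ (Set.range φ)
  let b := stdOrthonormalBasis ℂ V
  have hP : OrthogonalFamily ℂ (fun c => P c) fun c => (P c).subtypeₗᵢ :=
    fun c c' h x y => horth c c' h x x.2 y y.2
  have hφ_le (c : C) :
      ‖(P c).starProjection (φ c)‖ ^ 2 ≤ ∑ i, ‖(P c).starProjection (b i)‖ ^ 2 := by
    simpa [hφ c] using b.norm_sq_map_le ((P c).starProjection ∘L V.subtypeL).toLinearMap
      ⟨φ c, Submodule.subset_span ⟨c, rfl⟩⟩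
  calc ∑ c, ‖(P c).starProjection (φ c)‖ ^ 2
      ≤ ∑ c, ∑ i, ‖(P c).starProjection (b i)‖ ^ 2 := Finset.sum_le_sum fun c _ => hφ_le c
    _ = ∑ i, ∑ c, ‖(P c).starProjection (b i)‖ ^ 2 := Finset.sum_comm
    _ ≤ ∑ i, ‖(b i : H)‖ ^ 2 := Finset.sum_le_sum fun i _ => hP.sum_norm_sq_starProjection_le _ _
    _ = Module.finrank ℂ V := by simp only [Submodule.norm_coe, b.norm_eq_one]; simp

theorem projective_measurement_success_bound
    (H : Type*) [NormedAddCommGroup H] [InnerProductSpace ℂ H]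
    [FiniteDimensional ℂ H]
    (C : Type*) [Fintype C] [Nonempty C]
    (φ : C → H) (hφ : ∀ c, ‖φ c‖ = 1)
    (P : C → Submodule ℂ H)
    (horth : ∀ c c', c ≠ c' → ∀ x ∈ P c, ∀ y ∈ P c', inner (𝕜 := ℂ) x y = 0) :
    (∑ c : C, ‖((P c).orthogonalProjection (φ c) : H)‖ ^ 2) / (Fintype.card C : ℝ)
      ≤ (Module.finrank ℂ (Submodule.span ℂ (Set.range φ)) : ℝ)
          / (Fintype.card C : ℝ) :=
  projective_measurement_success_bound_general H C φ hφ P horth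
end
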